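/- Under the stated IBCN assumptions (including f bounded below by f_min and ‖∇²f‖ bounded by H_max on the level set {x : f(x) ≤ f(x₀)}), the gradients of the iterates converge to zero: lim_{k→∞} ∇f(x_k) = 0. -/

import Mathlib

open scoped RealInnerProductSpace

noncomputable section

/-- `U_I`: extension by zero from block coordinates to full coordinates. -/
def blockIncl {n : ℕ} (I : Finset (Fin n)) :
    EuclideanSpace ℝ ↥I →ₗ[ℝ] EuclideanSpace ℝ (Fin n) where
  toFun s := WithLp.toLp 2 (fun i => if h : i ∈ I then s ⟨i, h⟩ else 0)
  map_add' s t := by ext i; by_cases h : i ∈ I <;> simp [h]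
  map_smul' c s := by ext i; by_cases h : i ∈ I <;> simp [h]

/-- `U_Iᵀ`: restriction of a vector to the block coordinates. -/
def blockRestr {n : ℕ} (I : Finset (Fin n)) :
    EuclideanSpace ℝ (Fin n) →ₗ[ℝ] EuclideanSpace ℝ ↥I where
  toFun x := WithLp.toLp 2 (fun i => x i)
  map_add' x y := by ext i; simp
  map_smul' c x := by ext i; simp

/-- Block Hessian `U_Iᵀ H U_I` as a continuous linear map. -/
def blockHess {n : ℕ} (I : Finset (Fin n))
    (H : EuclideanSpace ℝ (Fin n) →L[ℝ] EuclideanSpace ℝ (Fin n)) :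
    EuclideanSpace ℝ ↥I →L[ℝ] EuclideanSpace ℝ ↥I :=
  LinearMap.toContinuousLinearMap
    ((blockRestr I) ∘ₗ ((H : EuclideanSpace ℝ (Fin n) →ₗ[ℝ] EuclideanSpace ℝ (Fin n)) ∘ₗ blockIncl I))

/-- Quadratic model `q(s) = f₀ + gᵀs + (1/2) sᵀ H s`. -/
def quadModel {E : Type*} [NormedAddCommGroup E] [InnerProductSpace ℝ E]
    (f₀ : ℝ) (g : E) (H : E →L[ℝ] E) (s : E) : ℝ :=
  f₀ + ⟪g, s⟫ + (1 / 2) * ⟪s, H s⟫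

/-- Cubic model `m(s) = q(s) + (σ/6) ‖s‖³`. -/
def cubicModel {E : Type*} [NormedAddCommGroup E] [InnerProductSpace ℝ E]
    (f₀ : ℝ) (g : E) (H : E →L[ℝ] E) (σ : ℝ) (s : E) : ℝ :=
  quadModel f₀ g H s + σ / 6 * ‖s‖ ^ 3

/-- Gradient of the cubic model: `∇m(s) = g + H s + (σ/2) ‖s‖ s`. -/
def cubicModelGrad {E : Type*} [NormedAddCommGroup E] [InnerProductSpace ℝ E]
    (g : E) (H : E →L[ℝ] E) (σ : ℝ) (s : E) : E :=
  g + H s + (σ / 2 * ‖s‖) • s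

/-- The stepsize `α̂ = min{β/‖H‖, √(3β/(σ‖g‖))}`, the first argument being `+∞` if `H = 0`. -/
def alphaHat {E : Type*} [NormedAddCommGroup E] [InnerProductSpace ℝ E]
    (β σ : ℝ) (g : E) (H : E →L[ℝ] E) : ℝ :=
  haveI := Classical.dec (H = 0)
  if H = 0 then Real.sqrt (3 * β / (σ * ‖g‖))
  else min (β / ‖H‖) (Real.sqrt (3 * β / (σ * ‖g‖)))

/-- The Cauchy-like point `ŝ = -α̂ g`. -/
def sHat {E : Type*} [NormedAddCommGroup E] [InnerProductSpace ℝ E]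
    (β σ : ℝ) (g : E) (H : E →L[ℝ] E) : E :=
  -(alphaHat β σ g H) • g

/-!
At the Cauchy-like point `ŝ = -α̂ g` the cubic model decreases by at least `α̂ (1 - β) ‖g‖²`
(`g` the block gradient), so the accepted step predicts at least that much decrease plus
`σ/6 ‖s‖³`; the Lipschitz Hessian makes the actual decrease at most `L/6 ‖s‖³` short of the
predicted one. Hence every iteration with `σ_k ≥ L / (1 - η₂)` is very successful, which caps
`σ_k` by `max (σ_0) (γ₃ L / (1 - η₂))`, and since `σ` grows geometrically on unsuccessful
iterations, infinitely many iterations are successful. With `σ_k` bounded and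
`‖∇²f‖ ≤ H_max` on the level set, `α̂_k ‖g_k‖²` is bounded below in terms of `‖g_k‖`, and the
greedy rule turns a lower bound on `‖∇f(x_k)‖` into one on `‖g_k‖`. So successful
iterations far from stationarity decrease `f` by a fixed amount, which can happen only finitely
often because `f(x_k)` is nonincreasing and bounded below; unsuccessful iterations do not move.
-/

section Block
variable {n : ℕ} (I : Finset (Fin n))

lemma blockRestr_blockIncl (s : EuclideanSpace ℝ I) : blockRestr I (blockIncl I s) = s := by
  ext i
  simp [blockRestr, blockIncl]

lemma inner_blockIncl (s : EuclideanSpace ℝ I) (v : EuclideanSpace ℝ (Fin n)) :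
    ⟪blockIncl I s, v⟫ = ⟪s, blockRestr I v⟫ := by
  simp only [PiLp.inner_apply, blockIncl, blockRestr, LinearMap.coe_mk, AddHom.coe_mk]
  rw [← Finset.sum_subset I.subset_univ (fun i _ hi => by simp [hi]), ← Finset.sum_coe_sort I]
  exact Finset.sum_congr rfl fun i _ => by simp

lemma norm_blockIncl (s : EuclideanSpace ℝ I) : ‖blockIncl I s‖ = ‖s‖ := by
  refine (sq_eq_sq₀ (norm_nonneg _) (norm_nonneg _)).1 ?_
  rw [← real_inner_self_eq_norm_sq, ← real_inner_self_eq_norm_sq, inner_blockIncl,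
    blockRestr_blockIncl]

lemma norm_blockRestr_le (v : EuclideanSpace ℝ (Fin n)) : ‖blockRestr I v‖ ≤ ‖v‖ := by
  have h := real_inner_le_norm (blockIncl I (blockRestr I v)) v
  rw [inner_blockIncl, real_inner_self_eq_norm_sq, norm_blockIncl] at h
  nlinarith [norm_nonneg (blockRestr I v), norm_nonneg v]

lemma norm_blockHess_le (H : EuclideanSpace ℝ (Fin n) →L[ℝ] EuclideanSpace ℝ (Fin n)) :
    ‖blockHess I H‖ ≤ ‖H‖ :=
  ContinuousLinearMap.opNorm_le_bound _ (norm_nonneg H) fun t =>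
    calc ‖blockRestr I (H (blockIncl I t))‖ ≤ ‖H (blockIncl I t)‖ := norm_blockRestr_le I _
      _ ≤ ‖H‖ * ‖t‖ := by simpa [norm_blockIncl] using H.le_opNorm (blockIncl I t)

lemma quadModel_blockRestr (f₀ : ℝ) (g : EuclideanSpace ℝ (Fin n))
    (H : EuclideanSpace ℝ (Fin n) →L[ℝ] EuclideanSpace ℝ (Fin n)) (s : EuclideanSpace ℝ I) :
    quadModel f₀ (blockRestr I g) (blockHess I H) s = quadModel f₀ g H (blockIncl I s) := by
  have hg : ⟪blockRestr I g, s⟫ = ⟪g, blockIncl I s⟫ := by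
    rw [real_inner_comm, ← inner_blockIncl, real_inner_comm]
  have hH : ⟪s, blockHess I H s⟫ = ⟪blockIncl I s, H (blockIncl I s)⟫ :=
    (inner_blockIncl I s _).symm
  rw [quadModel, quadModel, hg, hH]

end Block

section CauchyPoint
variable {F : Type*} [NormedAddCommGroup F] [InnerProductSpace ℝ F]
  {β σ : ℝ} {g : F} {H : F →L[ℝ] F}

lemma alphaHat_pos (hβ : 0 < β) (hσ : 0 < σ) (hg : g ≠ 0) : 0 < alphaHat β σ g H := by
  have hsqrt : 0 < √(3 * β / (σ * ‖g‖)) := Real.sqrt_pos.2 (by positivity)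
  unfold alphaHat
  split_ifs with hH
  · exact hsqrt
  · exact lt_min (div_pos hβ (norm_pos_iff.2 hH)) hsqrt

lemma alphaHat_le_sqrt : alphaHat β σ g H ≤ √(3 * β / (σ * ‖g‖)) := by
  unfold alphaHat
  split_ifs
  exacts [le_rfl, min_le_right _ _]

lemma alphaHat_mul_norm_le (hβ : 0 ≤ β) : alphaHat β σ g H * ‖H‖ ≤ β := by
  unfold alphaHat
  split_ifs with hH
  · simpa [hH] using hβ
  · calc min (β / ‖H‖) √(3 * β / (σ * ‖g‖)) * ‖H‖ ≤ β / ‖H‖ * ‖H‖ := by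
          gcongr; exact min_le_left _ _
      _ = β := div_mul_cancel₀ β (norm_ne_zero_iff.2 hH)

lemma min_le_alphaHat {S M : ℝ} (hβ : 0 ≤ β) (hσ : 0 < σ) (hσS : σ ≤ S) (hg : g ≠ 0)
    (hHM : ‖H‖ ≤ M) : min (β / M) √(3 * β / (S * ‖g‖)) ≤ alphaHat β σ g H := by
  have hsqrt : √(3 * β / (S * ‖g‖)) ≤ √(3 * β / (σ * ‖g‖)) := by gcongr
  unfold alphaHat
  split_ifs with hH
  · exact (min_le_right _ _).trans hsqrt
  · exact min_le_min (div_le_div_of_nonneg_left hβ (norm_pos_iff.2 hH) hHM) hsqrt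

lemma cubicModel_neg_smul (f₀ : ℝ) {a : ℝ} (ha : 0 ≤ a) :
    cubicModel f₀ g H σ (-a • g) =
      f₀ - a * ‖g‖ ^ 2 + a ^ 2 / 2 * ⟪g, H g⟫ + σ / 6 * a ^ 3 * ‖g‖ ^ 3 := by
  simp only [cubicModel, quadModel, map_smul, real_inner_smul_left, real_inner_smul_right,
    real_inner_self_eq_norm_sq, norm_smul, norm_neg, Real.norm_of_nonneg ha]
  ring

lemma cubicModel_sHat_le (f₀ : ℝ) (hβ : 0 < β) (hσ : 0 < σ) (hg : g ≠ 0) :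
    cubicModel f₀ g H σ (sHat β σ g H) ≤ f₀ - alphaHat β σ g H * (1 - β) * ‖g‖ ^ 2 := by
  set α := alphaHat β σ g H
  have hα : 0 < α := alphaHat_pos hβ hσ hg
  -- the two caps in `α̂` bound the quadratic and the cubic term by `(β/2) α ‖g‖²` each
  have hαH : α * ‖H‖ ≤ β := alphaHat_mul_norm_le hβ.le
  have hασ : σ * ‖g‖ * α ^ 2 ≤ 3 * β := by
    have := pow_le_pow_left₀ hα.le (alphaHat_le_sqrt (H := H)) 2
    rw [Real.sq_sqrt (by positivity)] at this
    calc σ * ‖g‖ * α ^ 2 ≤ σ * ‖g‖ * (3 * β / (σ * ‖g‖)) := by gcongr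
      _ = 3 * β := by field_simp
  have hgHg : ⟪g, H g⟫ ≤ ‖H‖ * ‖g‖ ^ 2 := by
    calc ⟪g, H g⟫ ≤ ‖g‖ * ‖H g‖ := real_inner_le_norm _ _
      _ ≤ ‖g‖ * (‖H‖ * ‖g‖) := by gcongr; exact H.le_opNorm g
      _ = ‖H‖ * ‖g‖ ^ 2 := by ring
  rw [sHat, cubicModel_neg_smul f₀ hα.le]
  nlinarith [mul_le_mul_of_nonneg_left hgHg (by positivity : (0 : ℝ) ≤ α ^ 2 / 2),
    mul_le_mul_of_nonneg_right hαH (by positivity : (0 : ℝ) ≤ α * ‖g‖ ^ 2),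
    mul_le_mul_of_nonneg_right hασ (by positivity : (0 : ℝ) ≤ α * ‖g‖ ^ 2)]

lemma le_quadModel_sub_of_cubicModel_le_sHat {f₀ : ℝ} {s : F} (hβ : 0 < β) (hσ : 0 < σ)
    (hg : g ≠ 0) (hs : cubicModel f₀ g H σ s ≤ cubicModel f₀ g H σ (sHat β σ g H)) :
    alphaHat β σ g H * (1 - β) * ‖g‖ ^ 2 + σ / 6 * ‖s‖ ^ 3 ≤
      quadModel f₀ g H 0 - quadModel f₀ g H s := by
  have := hs.trans (cubicModel_sHat_le f₀ hβ hσ hg)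
  simp only [cubicModel, quadModel, inner_zero_right, map_zero] at this ⊢
  linarith

lemma min_le_alphaHat_mul_sq {S M ε : ℝ} (hβ : 0 ≤ β) (hσ : 0 < σ) (hσS : σ ≤ S) (hg : g ≠ 0)
    (hHM : ‖H‖ ≤ M) (hM : 0 < M) (hε : 0 ≤ ε) (hεg : ε ≤ ‖g‖) :
    min (β * ε ^ 2 / M) √(3 * β * ε ^ 3 / S) ≤ alphaHat β σ g H * ‖g‖ ^ 2 := by
  have hS : 0 < S := hσ.trans_le hσS
  have hgpos : 0 < ‖g‖ := norm_pos_iff.2 hg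
  have hsqrt : √(3 * β / (S * ‖g‖)) * ‖g‖ ^ 2 = √(3 * β * ‖g‖ ^ 3 / S) := by
    rw [← Real.sqrt_sq (sq_nonneg ‖g‖), ← Real.sqrt_mul (by positivity)]
    congr 1
    field_simp
  calc min (β * ε ^ 2 / M) √(3 * β * ε ^ 3 / S)
      ≤ min (β / M * ‖g‖ ^ 2) (√(3 * β / (S * ‖g‖)) * ‖g‖ ^ 2) := by
        rw [hsqrt, div_mul_eq_mul_div]
        gcongr
    _ = min (β / M) √(3 * β / (S * ‖g‖)) * ‖g‖ ^ 2 := (min_mul_of_nonneg _ _ (sq_nonneg _)).symm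
    _ ≤ alphaHat β σ g H * ‖g‖ ^ 2 := by gcongr; exact min_le_alphaHat hβ hσ hσS hg hHM

lemma quadModel_sub_pos {f₀ : ℝ} {s : F} (hβ : 0 < β) (hβ1 : β < 1) (hσ : 0 < σ) (hg : g ≠ 0)
    (hs : cubicModel f₀ g H σ s ≤ cubicModel f₀ g H σ (sHat β σ g H)) :
    0 < quadModel f₀ g H 0 - quadModel f₀ g H s := by
  have := alphaHat_pos (H := H) hβ hσ hg
  have := norm_pos_iff.2 hg
  have := sub_pos.2 hβ1
  exact lt_of_lt_of_le (by positivity) (le_quadModel_sub_of_cubicModel_le_sHat hβ hσ hg hs)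

lemma min_le_quadModel_sub {f₀ S M ε : ℝ} {s : F} (hβ : 0 < β) (hβ1 : β ≤ 1) (hσ : 0 < σ)
    (hσS : σ ≤ S) (hg : g ≠ 0) (hHM : ‖H‖ ≤ M) (hM : 0 < M) (hε : 0 ≤ ε) (hεg : ε ≤ ‖g‖)
    (hs : cubicModel f₀ g H σ s ≤ cubicModel f₀ g H σ (sHat β σ g H)) :
    (1 - β) * min (β * ε ^ 2 / M) √(3 * β * ε ^ 3 / S) ≤
      quadModel f₀ g H 0 - quadModel f₀ g H s := by
  have hcubic : 0 ≤ σ / 6 * ‖s‖ ^ 3 := by positivity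
  calc (1 - β) * min (β * ε ^ 2 / M) √(3 * β * ε ^ 3 / S)
      ≤ (1 - β) * (alphaHat β σ g H * ‖g‖ ^ 2) := by
        gcongr
        exact min_le_alphaHat_mul_sq hβ.le hσ hσS hg hHM hM hε hεg
    _ ≤ alphaHat β σ g H * (1 - β) * ‖g‖ ^ 2 + σ / 6 * ‖s‖ ^ 3 := by linarith
    _ ≤ quadModel f₀ g H 0 - quadModel f₀ g H s :=
      le_quadModel_sub_of_cubicModel_le_sHat hβ hσ hg hs

end CauchyPoint

section Taylor
variable {E : Type*} [NormedAddCommGroup E] [InnerProductSpace ℝ E]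

lemma hasDerivAt_add_smul (y h : E) (t : ℝ) : HasDerivAt (fun u : ℝ => y + u • h) h t := by
  simpa using ((hasDerivAt_id t).smul_const h).const_add y

lemma norm_sub_sub_le_of_lipschitz_hessian {gradf : E → E} {hessf : E → E →L[ℝ] E} {L : ℝ}
    (hhessf : ∀ x, HasFDerivAt gradf (hessf x) x)
    (hlip : ∀ x y, ‖hessf x - hessf y‖ ≤ L * ‖x - y‖) (y h : E) :
    ‖gradf (y + h) - gradf y - hessf y h‖ ≤ L / 2 * ‖h‖ ^ 2 := by
  let e : ℝ → E := fun t => gradf (y + t • h) - gradf y - t • hessf y h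
  have he (t : ℝ) : HasDerivAt e (hessf (y + t • h) h - hessf y h) t :=
    (((hhessf _).comp_hasDerivAt t (hasDerivAt_add_smul y h t)).sub_const _).sub
      (by simpa using (hasDerivAt_id t).smul_const (hessf y h))
  have hB (t : ℝ) : HasDerivAt (fun t => L / 2 * t ^ 2 * ‖h‖ ^ 2) (L * t * ‖h‖ ^ 2) t :=
    (((hasDerivAt_pow 2 t).const_mul (L / 2)).mul_const _).congr_deriv (by push_cast; ring)
  have hbound : ∀ t ∈ Set.Ico (0 : ℝ) 1, ‖hessf (y + t • h) h - hessf y h‖ ≤ L * t * ‖h‖ ^ 2 := by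
    intro t ht
    calc ‖hessf (y + t • h) h - hessf y h‖ ≤ ‖hessf (y + t • h) - hessf y‖ * ‖h‖ :=
          (hessf (y + t • h) - hessf y).le_opNorm h
      _ ≤ L * ‖t • h‖ * ‖h‖ := by
          gcongr
          simpa using hlip (y + t • h) y
      _ = L * t * ‖h‖ ^ 2 := by rw [norm_smul, Real.norm_of_nonneg ht.1]; ring
  have := image_norm_le_of_norm_deriv_right_le_deriv_boundary
    (fun t _ => (he t).continuousAt.continuousWithinAt) (fun t _ => (he t).hasDerivWithinAt)
    (by simp [e]) hB hbound (Set.right_mem_Icc.2 zero_le_one)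
  simpa [e] using this

lemma le_quadModel_add_of_lipschitz_hessian [CompleteSpace E] {f : E → ℝ} {gradf : E → E}
    {hessf : E → E →L[ℝ] E} {L : ℝ} (hgradf : ∀ x, HasGradientAt f (gradf x) x)
    (hhessf : ∀ x, HasFDerivAt gradf (hessf x) x)
    (hlip : ∀ x y, ‖hessf x - hessf y‖ ≤ L * ‖x - y‖) (y h : E) :
    f (y + h) ≤ quadModel (f y) (gradf y) (hessf y) h + L / 6 * ‖h‖ ^ 3 := by
  let φ : ℝ → ℝ := fun t =>
    f (y + t • h) - f y - t * ⟪gradf y, h⟫ - t ^ 2 / 2 * ⟪h, hessf y h⟫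
  have hφ (t : ℝ) : HasDerivAt φ ⟪gradf (y + t • h) - gradf y - hessf y (t • h), h⟫ t := by
    refine (((((hgradf _).hasFDerivAt.comp_hasDerivAt t (hasDerivAt_add_smul y h t)).sub_const
      (f y)).sub ((hasDerivAt_id t).mul_const _)).sub
      (((hasDerivAt_pow 2 t).div_const 2).mul_const _)).congr_deriv ?_
    simp [inner_sub_right, real_inner_smul_right, real_inner_comm h]
  have hB (t : ℝ) : HasDerivAt (fun t => L / 6 * t ^ 3 * ‖h‖ ^ 3) (L / 2 * t ^ 2 * ‖h‖ ^ 3) t :=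
    (((hasDerivAt_pow 3 t).const_mul (L / 6)).mul_const _).congr_deriv (by push_cast; ring)
  have hbound : ∀ t ∈ Set.Ico (0 : ℝ) 1,
      ⟪gradf (y + t • h) - gradf y - hessf y (t • h), h⟫ ≤ L / 2 * t ^ 2 * ‖h‖ ^ 3 := by
    intro t ht
    calc ⟪gradf (y + t • h) - gradf y - hessf y (t • h), h⟫
        ≤ ‖gradf (y + t • h) - gradf y - hessf y (t • h)‖ * ‖h‖ := real_inner_le_norm _ _
      _ ≤ L / 2 * ‖t • h‖ ^ 2 * ‖h‖ := by
          gcongr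
          exact norm_sub_sub_le_of_lipschitz_hessian hhessf hlip y (t • h)
      _ = L / 2 * t ^ 2 * ‖h‖ ^ 3 := by rw [norm_smul, Real.norm_of_nonneg ht.1]; ring
  have := image_le_of_deriv_right_le_deriv_boundary
    (fun t _ => (hφ t).continuousAt.continuousWithinAt) (fun t _ => (hφ t).hasDerivWithinAt)
    (by simp [φ]) (fun t _ => (hB t).continuousAt.continuousWithinAt)
    (fun t _ => (hB t).hasDerivWithinAt) hbound (Set.right_mem_Icc.2 zero_le_one)
  simp only [φ, one_smul, one_mul, one_pow] at this
  unfold quadModel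
  linarith

end Taylor

lemma le_div_quadModel_sub_of_lipschitz_hessian {n : ℕ} {f : EuclideanSpace ℝ (Fin n) → ℝ}
    {gradf : EuclideanSpace ℝ (Fin n) → EuclideanSpace ℝ (Fin n)}
    {hessf : EuclideanSpace ℝ (Fin n) → EuclideanSpace ℝ (Fin n) →L[ℝ] EuclideanSpace ℝ (Fin n)}
    {L β σ η : ℝ} (hgradf : ∀ x, HasGradientAt f (gradf x) x)
    (hhessf : ∀ x, HasFDerivAt gradf (hessf x) x)
    (hlip : ∀ x y, ‖hessf x - hessf y‖ ≤ L * ‖x - y‖) {y : EuclideanSpace ℝ (Fin n)}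
    {I : Finset (Fin n)} {s : EuclideanSpace ℝ I} (hβ : 0 < β) (hβ1 : β < 1) (hσ : 0 < σ)
    (hg : blockRestr I (gradf y) ≠ 0)
    (hs : cubicModel (f y) (blockRestr I (gradf y)) (blockHess I (hessf y)) σ s ≤
      cubicModel (f y) (blockRestr I (gradf y)) (blockHess I (hessf y)) σ
        (sHat β σ (blockRestr I (gradf y)) (blockHess I (hessf y))))
    (hη : η ≤ 1) (hLσ : L ≤ (1 - η) * σ) :
    η ≤ (f y - f (y + blockIncl I s)) /
      (quadModel (f y) (blockRestr I (gradf y)) (blockHess I (hessf y)) 0 -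
        quadModel (f y) (blockRestr I (gradf y)) (blockHess I (hessf y)) s) := by
  have hD := quadModel_sub_pos hβ hβ1 hσ hg hs
  have hpred := le_quadModel_sub_of_cubicModel_le_sHat hβ hσ hg hs
  have hα := alphaHat_pos (H := blockHess I (hessf y)) hβ hσ hg
  have hcauchy : 0 ≤ (1 - η) * (alphaHat β σ (blockRestr I (gradf y)) (blockHess I (hessf y)) *
      (1 - β) * ‖blockRestr I (gradf y)‖ ^ 2) := by
    have := sub_nonneg.2 hη
    have := sub_pos.2 hβ1
    positivity
  have hactual := le_quadModel_add_of_lipschitz_hessian hgradf hhessf hlip y (blockIncl I s)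
  rw [← quadModel_blockRestr, norm_blockIncl] at hactual
  have hq0 : quadModel (f y) (blockRestr I (gradf y)) (blockHess I (hessf y)) 0 = f y := by
    simp [quadModel]
  rw [le_div_iff₀ hD]
  -- the cubic term `σ/6 ‖s‖³` of the predicted decrease absorbs the Taylor error `L/6 ‖s‖³`
  linarith [mul_le_mul_of_nonneg_right hLσ (by positivity : (0 : ℝ) ≤ ‖s‖ ^ 3),
    mul_le_mul_of_nonneg_left hpred (sub_nonneg.2 hη)]

lemma le_max_of_succ_le_mul {σ ρ : ℕ → ℝ} {η₁ η₂ γ₂ γ₃ c : ℝ} (hγ₂ : 0 ≤ γ₂) (hγ₂₃ : γ₂ ≤ γ₃)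
    (hpos : ∀ k, 0 < σ k)
    (hσ1 : ∀ k, η₂ ≤ ρ k → σ (k + 1) ≤ σ k)
    (hσ2 : ∀ k, η₁ ≤ ρ k → ρ k < η₂ → σ (k + 1) ≤ γ₂ * σ k)
    (hσ3 : ∀ k, ρ k < η₁ → σ (k + 1) ≤ γ₃ * σ k)
    (hsucc : ∀ k, c ≤ σ k → η₂ ≤ ρ k) (k : ℕ) : σ k ≤ max (σ 0) (γ₃ * c) := by
  induction k with
  | zero => exact le_max_left _ _
  | succ k ih =>
    by_cases hρ₂ : η₂ ≤ ρ k
    · exact (hσ1 k hρ₂).trans ih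
    have hσc : σ k < c := lt_of_not_ge fun h => hρ₂ (hsucc k h)
    have hstep : σ (k + 1) ≤ γ₃ * σ k := by
      by_cases hρ₁ : η₁ ≤ ρ k
      · exact (hσ2 k hρ₁ (lt_of_not_ge hρ₂)).trans (by gcongr; exact (hpos k).le)
      · exact hσ3 k (lt_of_not_ge hρ₁)
    calc σ (k + 1) ≤ γ₃ * σ k := hstep
      _ ≤ γ₃ * c := by gcongr; linarith
      _ ≤ max (σ 0) (γ₃ * c) := le_max_right _ _

lemma frequently_of_bounded_of_mul_le {σ : ℕ → ℝ} {P : ℕ → Prop} {γ M : ℝ} (hγ : 1 < γ)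
    (hpos : ∀ k, 0 < σ k) (hbdd : ∀ k, σ k ≤ M) (hgrow : ∀ k, ¬ P k → γ * σ k ≤ σ (k + 1)) :
    ∃ᶠ k in Filter.atTop, P k := by
  rw [Filter.frequently_atTop]
  intro N
  by_contra! hfail
  have hpow (m : ℕ) : γ ^ m * σ N ≤ σ (N + m) := by
    induction m with
    | zero => simp
    | succ m ih =>
      calc γ ^ (m + 1) * σ N = γ * (γ ^ m * σ N) := by ring
        _ ≤ γ * σ (N + m) := by gcongr
        _ ≤ σ (N + m + 1) := hgrow _ (hfail _ (Nat.le_add_right N m))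
  obtain ⟨m, hm⟩ := pow_unbounded_of_one_lt (M / σ N) hγ
  rw [div_lt_iff₀ (hpos N)] at hm
  exact (hm.trans_le (hpow m)).not_ge (hbdd _)

lemma eventually_of_frequently_of_stalls {X : Type*} {u : ℕ → X} {P : ℕ → Prop} {S : Set X}
    (hP : ∃ᶠ k in Filter.atTop, P k) (hstall : ∀ k, ¬ P k → u (k + 1) = u k)
    (hS : ∀ᶠ k in Filter.atTop, P k → u k ∈ S) : ∀ᶠ k in Filter.atTop, u k ∈ S := by
  obtain ⟨N, hN⟩ := Filter.eventually_atTop.1 hS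
  -- walk forward from `k` to the next `j` with `P j`; `u` does not move in between
  have key (d : ℕ) : ∀ k, N ≤ k → P (k + d) → u k ∈ S := by
    induction d with
    | zero => exact fun k hk hP => hN k hk hP
    | succ d ih =>
      intro k hk hPd
      by_cases hPk : P k
      · exact hN k hk hPk
      · rw [← hstall k hPk]
        exact ih (k + 1) (by omega) (by rwa [add_right_comm])
  refine Filter.eventually_atTop.2 ⟨N, fun k hk => ?_⟩
  obtain ⟨j, hkj, hPj⟩ := Filter.frequently_atTop.1 hP k
  exact key (j - k) k hk (by rwa [Nat.add_sub_cancel' hkj])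

lemma tendsto_zero_of_sufficient_decrease {X : Type*} [SeminormedAddCommGroup X] {F : ℕ → ℝ}
    {u : ℕ → X} {P : ℕ → Prop} (hF : Antitone F) (hbdd : BddBelow (Set.range F))
    (hP : ∃ᶠ k in Filter.atTop, P k) (hstall : ∀ k, ¬ P k → u (k + 1) = u k)
    (hdec : ∀ ε > 0, ∃ δ > 0, ∀ k, P k → ε ≤ ‖u k‖ → δ ≤ F k - F (k + 1)) :
    Filter.Tendsto u Filter.atTop (nhds 0) := by
  have hlim := tendsto_atTop_ciInf hF hbdd
  have hdiff : Filter.Tendsto (fun k => F k - F (k + 1)) Filter.atTop (nhds 0) := by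
    simpa using hlim.sub (hlim.comp (Filter.tendsto_add_atTop_nat 1))
  refine Metric.nhds_basis_ball.tendsto_right_iff.2 fun ε hε => ?_
  obtain ⟨δ, hδ, hδdec⟩ := hdec ε hε
  refine eventually_of_frequently_of_stalls hP hstall ?_
  filter_upwards [hdiff.eventually (gt_mem_nhds hδ)] with k hk hPk
  rw [mem_ball_zero_iff]
  exact lt_of_not_ge fun h => (hδdec k hPk h).not_gt hk

theorem stmt14_general (n : ℕ)
    (f : EuclideanSpace ℝ (Fin n) → ℝ)
    (gradf : EuclideanSpace ℝ (Fin n) → EuclideanSpace ℝ (Fin n))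
    (hessf : EuclideanSpace ℝ (Fin n) → (EuclideanSpace ℝ (Fin n) →L[ℝ] EuclideanSpace ℝ (Fin n)))
    (hgradf : ∀ x, HasGradientAt f (gradf x) x)
    (hhessf : ∀ x, HasFDerivAt gradf (hessf x) x)
    (L : ℝ)
    (hlipL : ∀ x y, ‖hessf x - hessf y‖ ≤ L * ‖x - y‖)
    (σmin η₁ η₂ γ₁ γ₂ γ₃ β θ : ℝ)
    (hη₁0 : 0 < η₁) (hη₂1 : η₂ < 1)
    (hγ₂ : 1 < γ₂) (hγ₂₃ : γ₂ ≤ γ₃)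
    (hβ0 : 0 < β) (hβ1 : β < 1) (hθ0 : 0 < θ)
    (x : ℕ → EuclideanSpace ℝ (Fin n)) (I : ℕ → Finset (Fin n))
    (s : ∀ k : ℕ, EuclideanSpace ℝ ↥(I k)) (σ : ℕ → ℝ) (ρ : ℕ → ℝ)
    (hσpos : ∀ k, 0 < σ k)
    (hgne : ∀ k, gradf (x k) ≠ 0)
    (hgreedy : ∀ k, θ * ‖gradf (x k)‖ ≤ ‖blockRestr (I k) (gradf (x k))‖)
    (hstepm : ∀ k, cubicModel (f (x k)) (blockRestr (I k) (gradf (x k)))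
        (blockHess (I k) (hessf (x k))) (σ k) (s k) ≤
      cubicModel (f (x k)) (blockRestr (I k) (gradf (x k)))
        (blockHess (I k) (hessf (x k))) (σ k)
        (sHat β (σ k) (blockRestr (I k) (gradf (x k))) (blockHess (I k) (hessf (x k)))))
    (hρ : ∀ k, ρ k = (f (x k) - f (x k + blockIncl (I k) (s k))) /
      (quadModel (f (x k)) (blockRestr (I k) (gradf (x k))) (blockHess (I k) (hessf (x k))) 0 -
       quadModel (f (x k)) (blockRestr (I k) (gradf (x k))) (blockHess (I k) (hessf (x k))) (s k)))
    (hx : ∀ k, x (k + 1) = if η₁ ≤ ρ k then x k + blockIncl (I k) (s k) else x k)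
    (hσ1 : ∀ k, η₂ ≤ ρ k → max σmin (γ₁ * σ k) ≤ σ (k + 1) ∧ σ (k + 1) ≤ σ k)
    (hσ2 : ∀ k, η₁ ≤ ρ k → ρ k < η₂ → σ k ≤ σ (k + 1) ∧ σ (k + 1) ≤ γ₂ * σ k)
    (hσ3 : ∀ k, ρ k < η₁ → γ₂ * σ k ≤ σ (k + 1) ∧ σ (k + 1) ≤ γ₃ * σ k)
    (fmin Hmax : ℝ) (hHmax : 0 < Hmax)
    (hfmin : ∀ y, f y ≤ f (x 0) → fmin ≤ f y)
    (hHb : ∀ y, f y ≤ f (x 0) → ‖hessf y‖ ≤ Hmax) :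
    Filter.Tendsto (fun k => gradf (x k)) Filter.atTop (nhds 0) := by
  set g := fun k => blockRestr (I k) (gradf (x k))
  set H := fun k => blockHess (I k) (hessf (x k))
  set D := fun k => quadModel (f (x k)) (g k) (H k) 0 - quadModel (f (x k)) (g k) (H k) (s k)
  have hg (k : ℕ) : g k ≠ 0 :=
    norm_pos_iff.1 ((mul_pos hθ0 (norm_pos_iff.2 (hgne k))).trans_le (hgreedy k))
  have hDpos (k : ℕ) : 0 < D k := quadModel_sub_pos hβ0 hβ1 (hσpos k) (hg k) (hstepm k)
  have hdec (k : ℕ) (hk : η₁ ≤ ρ k) : η₁ * D k ≤ f (x k) - f (x (k + 1)) := by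
    rw [hx k, if_pos hk]
    exact (le_div_iff₀ (hDpos k)).1 (hρ k ▸ hk)
  have hanti : Antitone (fun k => f (x k)) := antitone_nat_of_succ_le fun k => by
    by_cases hk : η₁ ≤ ρ k
    · nlinarith [hdec k hk, hDpos k]
    · rw [hx k, if_neg hk]
  set σmax := max (σ 0) (γ₃ * (L / (1 - η₂)))
  have hσmax : ∀ k, σ k ≤ σmax :=
    le_max_of_succ_le_mul (by linarith) hγ₂₃ hσpos (fun k h => (hσ1 k h).2)
      (fun k h₁ h₂ => (hσ2 k h₁ h₂).2) (fun k h => (hσ3 k h).2) fun k hk =>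
        hρ k ▸ le_div_quadModel_sub_of_lipschitz_hessian hgradf hhessf hlipL hβ0 hβ1 (hσpos k)
          (hg k) (hstepm k) hη₂1.le ((div_le_iff₀' (sub_pos.2 hη₂1)).1 hk)
  have hfreq : ∃ᶠ k in Filter.atTop, η₁ ≤ ρ k :=
    frequently_of_bounded_of_mul_le hγ₂ hσpos hσmax fun k h => (hσ3 k (not_le.1 h)).1
  refine tendsto_zero_of_sufficient_decrease hanti ⟨fmin, ?_⟩ hfreq
    (fun k h => by rw [hx k, if_neg h]) fun ε hε => ?_
  · rintro _ ⟨k, rfl⟩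
    exact hfmin _ (hanti (Nat.zero_le k))
  have hσmax_pos : 0 < σmax := (hσpos 0).trans_le (le_max_left _ _)
  refine ⟨η₁ * ((1 - β) * min (β * (θ * ε) ^ 2 / Hmax) √(3 * β * (θ * ε) ^ 3 / σmax)),
    by have := sub_pos.2 hβ1; positivity,
    fun k hk hεk => (mul_le_mul_of_nonneg_left ?_ hη₁0.le).trans (hdec k hk)⟩
  exact min_le_quadModel_sub hβ0 hβ1.le (hσpos k) (hσmax k) (hg k)
    ((norm_blockHess_le _ _).trans (hHb _ (hanti (Nat.zero_le k)))) hHmax (by positivity)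
    ((mul_le_mul_of_nonneg_left hεk hθ0.le).trans (hgreedy k)) (hstepm k)

theorem stmt14 (n : ℕ) (hn : 0 < n)
    (f : EuclideanSpace ℝ (Fin n) → ℝ)
    (gradf : EuclideanSpace ℝ (Fin n) → EuclideanSpace ℝ (Fin n))
    (hessf : EuclideanSpace ℝ (Fin n) → (EuclideanSpace ℝ (Fin n) →L[ℝ] EuclideanSpace ℝ (Fin n)))
    (hf : ContDiff ℝ 2 f)
    (hgradf : ∀ x, HasGradientAt f (gradf x) x)
    (hhessf : ∀ x, HasFDerivAt gradf (hessf x) x)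
    (L : ℝ) (hL : 0 < L)
    (hlipL : ∀ x y, ‖hessf x - hessf y‖ ≤ L * ‖x - y‖)
    (σmin σ₀ η₁ η₂ γ₁ γ₂ γ₃ τ β θ : ℝ)
    (hσmin : 0 < σmin) (hσ₀ : σmin ≤ σ₀)
    (hη₁0 : 0 < η₁) (hη₁₂ : η₁ ≤ η₂) (hη₂1 : η₂ < 1)
    (hγ₁0 : 0 < γ₁) (hγ₁1 : γ₁ ≤ 1) (hγ₂ : 1 < γ₂) (hγ₂₃ : γ₂ ≤ γ₃)
    (hτ : 0 ≤ τ) (hβ0 : 0 < β) (hβ1 : β < 1) (hθ0 : 0 < θ) (hθ1 : θ ≤ 1)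
    (x : ℕ → EuclideanSpace ℝ (Fin n)) (I : ℕ → Finset (Fin n))
    (s : ∀ k : ℕ, EuclideanSpace ℝ ↥(I k)) (σ : ℕ → ℝ) (ρ : ℕ → ℝ)
    (hσzero : σ 0 = σ₀) (hσpos : ∀ k, 0 < σ k)
    (hgne : ∀ k, gradf (x k) ≠ 0)
    (hgreedy : ∀ k, θ * ‖gradf (x k)‖ ≤ ‖blockRestr (I k) (gradf (x k))‖)
    (hstepg : ∀ k, ‖cubicModelGrad (blockRestr (I k) (gradf (x k)))
        (blockHess (I k) (hessf (x k))) (σ k) (s k)‖ ≤ τ * ‖s k‖ ^ 2)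
    (hstepm : ∀ k, cubicModel (f (x k)) (blockRestr (I k) (gradf (x k)))
        (blockHess (I k) (hessf (x k))) (σ k) (s k) ≤
      cubicModel (f (x k)) (blockRestr (I k) (gradf (x k)))
        (blockHess (I k) (hessf (x k))) (σ k)
        (sHat β (σ k) (blockRestr (I k) (gradf (x k))) (blockHess (I k) (hessf (x k)))))
    (hρ : ∀ k, ρ k = (f (x k) - f (x k + blockIncl (I k) (s k))) /
      (quadModel (f (x k)) (blockRestr (I k) (gradf (x k))) (blockHess (I k) (hessf (x k))) 0 -
       quadModel (f (x k)) (blockRestr (I k) (gradf (x k))) (blockHess (I k) (hessf (x k))) (s k)))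
    (hx : ∀ k, x (k + 1) = if η₁ ≤ ρ k then x k + blockIncl (I k) (s k) else x k)
    (hσ1 : ∀ k, η₂ ≤ ρ k → max σmin (γ₁ * σ k) ≤ σ (k + 1) ∧ σ (k + 1) ≤ σ k)
    (hσ2 : ∀ k, η₁ ≤ ρ k → ρ k < η₂ → σ k ≤ σ (k + 1) ∧ σ (k + 1) ≤ γ₂ * σ k)
    (hσ3 : ∀ k, ρ k < η₁ → γ₂ * σ k ≤ σ (k + 1) ∧ σ (k + 1) ≤ γ₃ * σ k)
    (fmin Hmax : ℝ) (hHmax : 0 < Hmax)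
    (hfmin : ∀ y, f y ≤ f (x 0) → fmin ≤ f y)
    (hHb : ∀ y, f y ≤ f (x 0) → ‖hessf y‖ ≤ Hmax) :
    Filter.Tendsto (fun k => gradf (x k)) Filter.atTop (nhds 0) :=
  stmt14_general n f gradf hessf hgradf hhessf L hlipL σmin η₁ η₂ γ₁ γ₂ γ₃ β θ hη₁0 hη₂1 hγ₂ hγ₂₃
    hβ0 hβ1 hθ0 x I s σ ρ hσpos hgne hgreedy hstepm hρ hx hσ1 hσ2 hσ3 fmin Hmax hHmax hfmin hHb

end
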